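/- arXiv:1105.3404 — 2 statements merged into one kernel-verified Lean document; each statement's English description precedes it below -/
import Mathlib

section
/- Let (B,g_B) and (F,g_F) be radical-stationary singular semi-Riemannian manifolds and let f : B → ℝ be a smooth function whose differential df is radical-annihilator. Then the warped product (M, g) = B ×_f F is radical-stationary, i.e. for all smooth vector fields X, Y : M → E_B × E_F and every point (p,q) ∈ M there exists w ∈ E_B × E_F such that κ(X,Y,Z)(p,q) = g (p,q) w (Z (p,q)) for every smooth vector field Z : M → E_B × E_F. -/
noncomputable section

section Basic

variable {E : Type*} [NormedAddCommGroup E] [NormedSpace ℝ E]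

/-- The Lie bracket of two vector fields. -/
def lieB (X Y : E → E) : E → E :=
  fun p => fderiv ℝ Y p (X p) - fderiv ℝ X p (Y p)

/-- The Koszul form of a singular metric `g`. -/
def koszul (g : E → (E →L[ℝ] E →L[ℝ] ℝ)) (X Y Z : E → E) : E → ℝ :=
  fun p =>
    (1 / 2) * (fderiv ℝ (fun x => g x (Y x) (Z x)) p (X p)
      + fderiv ℝ (fun x => g x (Z x) (X x)) p (Y p)
      - fderiv ℝ (fun x => g x (X x) (Y x)) p (Z p)
      - g p (X p) (lieB Y Z p)
      + g p (Y p) (lieB Z X p)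
      + g p (Z p) (lieB X Y p))

/-- `g` is a singular (semi-Riemannian) metric on `M`: smooth and pointwise symmetric. -/
def IsSingularMetric (M : Set E) (g : E → (E →L[ℝ] E →L[ℝ] ℝ)) : Prop :=
  ContDiffOn ℝ (⊤ : ℕ∞) g M ∧ ∀ p ∈ M, ∀ u v : E, g p u v = g p v u

/-- `w` represents the 1-form `κ(X,Y,_)` at `p` via the metric `g`. -/
def KoszulWitness (M : Set E) (g : E → (E →L[ℝ] E →L[ℝ] ℝ)) (X Y : E → E)
    (p w : E) : Prop :=
  ∀ Z : E → E, ContDiffOn ℝ (⊤ : ℕ∞) Z M → koszul g X Y Z p = g p w (Z p)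

/-- `(M,g)` is radical-stationary. -/
def RadicalStationary (M : Set E) (g : E → (E →L[ℝ] E →L[ℝ] ℝ)) : Prop :=
  ∀ X Y : E → E, ContDiffOn ℝ (⊤ : ℕ∞) X M → ContDiffOn ℝ (⊤ : ℕ∞) Y M →
    ∀ p ∈ M, ∃ w : E, KoszulWitness M g X Y p w

/-- `(M,g)` is semi-regular: radical-stationary and every covariant contraction
`κ(X,Y,•)κ(Z,T,•)` is a (well-defined) smooth function on `M`. -/
def SemiRegular (M : Set E) (g : E → (E →L[ℝ] E →L[ℝ] ℝ)) : Prop :=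
  RadicalStationary M g ∧
  ∀ X Y Z T : E → E, ContDiffOn ℝ (⊤ : ℕ∞) X M → ContDiffOn ℝ (⊤ : ℕ∞) Y M →
    ContDiffOn ℝ (⊤ : ℕ∞) Z M → ContDiffOn ℝ (⊤ : ℕ∞) T M →
    ∃ k : E → ℝ, ContDiffOn ℝ (⊤ : ℕ∞) k M ∧
      ∀ p ∈ M, ∀ w₁ w₂ : E,
        KoszulWitness M g X Y p w₁ → KoszulWitness M g Z T p w₂ →
          k p = g p w₁ w₂

/-- The differential of `f` is radical-annihilator on `B`. -/
def DiffRadicalAnnihilator (B : Set E) (g : E → (E →L[ℝ] E →L[ℝ] ℝ))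
    (f : E → ℝ) : Prop :=
  ∀ p ∈ B, ∃ w : E, ∀ z : E, fderiv ℝ f p z = g p w z

/-- `df ∈ Ω¹_s(B)`: `df` is radical-annihilator and the 1-forms `Y ↦ (∇_X df)(Y)`,
`(∇_X df)(Y) := X(Y f) - κ(X,Y,•)(df)(•)`, are radical-annihilator. -/
def DiffInOmega1s (B : Set E) (g : E → (E →L[ℝ] E →L[ℝ] ℝ)) (f : E → ℝ) : Prop :=
  DiffRadicalAnnihilator B g f ∧
  ∀ X : E → E, ContDiffOn ℝ (⊤ : ℕ∞) X B → ∀ p ∈ B, ∃ w : E,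
    ∀ Y : E → E, ContDiffOn ℝ (⊤ : ℕ∞) Y B → ∀ w₁ w₂ : E,
      KoszulWitness B g X Y p w₁ → (∀ z : E, fderiv ℝ f p z = g p w₂ z) →
        fderiv ℝ (fun x => fderiv ℝ f x (Y x)) p (X p) - g p w₁ w₂ = g p w (Y p)

/-- The value of the Riemann curvature tensor
`R(X,Y,Z,T) = X κ(Y,Z,T) - Y κ(X,Z,T) - κ([X,Y],Z,T) + κ(X,Z,•)κ(Y,T,•) - κ(Y,Z,•)κ(X,T,•)`
at `p`, written using vectors `w₁, w₂, w₃, w₄` representing the 1-forms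
`κ(X,Z,_), κ(Y,T,_), κ(Y,Z,_), κ(X,T,_)` at `p`, so that the covariant contractions
are `g p w₁ w₂` and `g p w₃ w₄`. -/
def riemannExpr (g : E → (E →L[ℝ] E →L[ℝ] ℝ)) (X Y Z T : E → E) (p : E)
    (w₁ w₂ w₃ w₄ : E) : ℝ :=
  fderiv ℝ (koszul g Y Z T) p (X p) - fderiv ℝ (koszul g X Z T) p (Y p)
    - koszul g (lieB X Y) Z T p + g p w₁ w₂ - g p w₃ w₄

end Basic

section Warped

variable {E₁ E₂ : Type*} [NormedAddCommGroup E₁] [NormedSpace ℝ E₁]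
  [NormedAddCommGroup E₂] [NormedSpace ℝ E₂]

/-- Lift a bilinear form on `E₁` to `E₁ × E₂` (acting through the first factor). -/
def liftBilinFst (b : E₁ →L[ℝ] E₁ →L[ℝ] ℝ) :
    (E₁ × E₂) →L[ℝ] (E₁ × E₂) →L[ℝ] ℝ :=
  (((b.comp (ContinuousLinearMap.fst ℝ E₁ E₂)).flip).comp
    (ContinuousLinearMap.fst ℝ E₁ E₂)).flip

/-- Lift a bilinear form on `E₂` to `E₁ × E₂` (acting through the second factor). -/
def liftBilinSnd (b : E₂ →L[ℝ] E₂ →L[ℝ] ℝ) :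
    (E₁ × E₂) →L[ℝ] (E₁ × E₂) →L[ℝ] ℝ :=
  (((b.comp (ContinuousLinearMap.snd ℝ E₁ E₂)).flip).comp
    (ContinuousLinearMap.snd ℝ E₁ E₂)).flip

/-- The warped product metric `g = g_B + f² g_F` on `B × F ⊆ E₁ × E₂`:
`g (p,q) ((u₁,u₂),(v₁,v₂)) = g_B p u₁ v₁ + f(p)² * g_F q u₂ v₂`. -/
def warpedMetric (gB : E₁ → (E₁ →L[ℝ] E₁ →L[ℝ] ℝ))
    (gF : E₂ → (E₂ →L[ℝ] E₂ →L[ℝ] ℝ)) (f : E₁ → ℝ) :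
    (E₁ × E₂) → ((E₁ × E₂) →L[ℝ] (E₁ × E₂) →L[ℝ] ℝ) :=
  fun x => liftBilinFst (gB x.1) + (f x.1) ^ 2 • liftBilinSnd (gF x.2)

/-- The lift to `E₁ × E₂` of a vector field on the base. -/
def liftVecB (X : E₁ → E₁) : (E₁ × E₂) → (E₁ × E₂) := fun x => (X x.1, 0)

/-- The lift to `E₁ × E₂` of a vector field on the fiber. -/
def liftVecF (V : E₂ → E₂) : (E₁ × E₂) → (E₁ × E₂) := fun x => (0, V x.2)

end Warped

/-!
For smooth fields the Koszul form splits as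
`κ(X,Y,Z)(p) = Γ_p(X p, Y p, Z p) + g_p(D_{X p} Y, Z p)`, where the Christoffel form of the first
kind `Γ_p(x,y,z) = ½(Dg(x)(y,z) + Dg(y)(z,x) - Dg(z)(x,y))` only involves the derivative of `g`.
The second summand is always represented by `g_p`, so radical-stationarity says exactly that each
`Γ_p(x,y,·)` is. For the warped metric
`Γ(x,y,z) = Γ_B + f² Γ_F + f (df(x₁) g_F(y₂,z₂) + df(y₁) g_F(x₂,z₂) - df(z₁) g_F(x₂,y₂))`:
the first two summands are represented by hypothesis, the term in `df(z₁)` because `df` is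
radical-annihilator, and the remaining two by the fibre vector `f⁻¹ (df(x₁) y₂ + df(y₁) x₂)`,
which the factor `f²` in the metric turns back into `f (…)`.
-/

theorem ContDiffOn.differentiableAt_of_isOpen {E G : Type*} [NormedAddCommGroup E]
    [NormedSpace ℝ E] [NormedAddCommGroup G] [NormedSpace ℝ G] {s : Set E} {h : E → G} {a : E}
    (hh : ContDiffOn ℝ (⊤ : ℕ∞) h s) (hs : IsOpen s) (ha : a ∈ s) : DifferentiableAt ℝ h a :=
  (hh.contDiffAt (hs.mem_nhds ha)).differentiableAt (by simp)

section Koszul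

variable {E : Type*} [NormedAddCommGroup E] [NormedSpace ℝ E]
  {g : E → (E →L[ℝ] E →L[ℝ] ℝ)} {p : E}

def christoffelForm (g : E → (E →L[ℝ] E →L[ℝ] ℝ)) (p x y z : E) : ℝ :=
  (1 / 2) * (fderiv ℝ g p x y z + fderiv ℝ g p y z x - fderiv ℝ g p z x y)

theorem fderiv_metric_apply (hg : DifferentiableAt ℝ g p) {U V : E → E}
    (hU : DifferentiableAt ℝ U p) (hV : DifferentiableAt ℝ V p) (d : E) :
    fderiv ℝ (fun x => g x (U x) (V x)) p d =
      fderiv ℝ g p d (U p) (V p) + g p (fderiv ℝ U p d) (V p) + g p (U p) (fderiv ℝ V p d) := by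
  rw [fderiv_clm_apply (hg.clm_apply hU) hV, fderiv_clm_apply hg hU]
  simp only [add_apply, ContinuousLinearMap.comp_apply, ContinuousLinearMap.flip_apply]
  ring

theorem fderiv_clm_apply_apply (hg : DifferentiableAt ℝ g p) (u v d : E) :
    fderiv ℝ (fun x => g x u v) p d = fderiv ℝ g p d u v := by
  simpa using fderiv_metric_apply hg (differentiableAt_const u) (differentiableAt_const v) d

theorem koszul_eq_christoffelForm_add (hg : DifferentiableAt ℝ g p)
    (hsymm : ∀ u v, g p u v = g p v u) {X Y Z : E → E} (hX : DifferentiableAt ℝ X p)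
    (hY : DifferentiableAt ℝ Y p) (hZ : DifferentiableAt ℝ Z p) :
    koszul g X Y Z p =
      christoffelForm g p (X p) (Y p) (Z p) + g p (fderiv ℝ Y p (X p)) (Z p) := by
  rw [koszul, fderiv_metric_apply hg hY hZ, fderiv_metric_apply hg hZ hX,
    fderiv_metric_apply hg hX hY, christoffelForm, lieB, lieB, lieB]
  simp only [map_sub]
  rw [hsymm (fderiv ℝ Z p (Y p)) (X p), hsymm (fderiv ℝ X p (Z p)) (Y p),
    hsymm (Z p) (fderiv ℝ Y p (X p))]
  ring

theorem radicalStationary_iff {M : Set E} (hM : IsOpen M) (hg : IsSingularMetric M g) :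
    RadicalStationary M g ↔
      ∀ p ∈ M, ∀ x y : E, ∃ w : E, ∀ z : E, christoffelForm g p x y z = g p w z := by
  have hkoszul {X Y Z : E → E} (hX : ContDiffOn ℝ (⊤ : ℕ∞) X M)
      (hY : ContDiffOn ℝ (⊤ : ℕ∞) Y M) (hZ : ContDiffOn ℝ (⊤ : ℕ∞) Z M) {p : E} (hp : p ∈ M) :=
    koszul_eq_christoffelForm_add (hg.1.differentiableAt_of_isOpen hM hp) (hg.2 p hp)
      (hX.differentiableAt_of_isOpen hM hp) (hY.differentiableAt_of_isOpen hM hp)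
      (hZ.differentiableAt_of_isOpen hM hp)
  constructor
  · intro hrs p hp x y
    obtain ⟨w, hw⟩ := hrs (fun _ => x) (fun _ => y) contDiffOn_const contDiffOn_const p hp
    refine ⟨w, fun z => ?_⟩
    have h := hkoszul (contDiffOn_const (c := x)) (contDiffOn_const (c := y))
      (contDiffOn_const (c := z)) hp
    rw [hw _ contDiffOn_const] at h
    simpa using h.symm
  · intro hΓ X Y hX hY p hp
    obtain ⟨w, hw⟩ := hΓ p hp (X p) (Y p)
    refine ⟨w + fderiv ℝ Y p (X p), fun Z hZ => ?_⟩
    rw [hkoszul hX hY hZ hp, hw, map_add, add_apply]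

end Koszul

section Warped

variable {E₁ E₂ : Type*} [NormedAddCommGroup E₁] [NormedSpace ℝ E₁]
  [NormedAddCommGroup E₂] [NormedSpace ℝ E₂]

theorem isBoundedLinearMap_bilinearComp {E F : Type*} [NormedAddCommGroup E] [NormedSpace ℝ E]
    [NormedAddCommGroup F] [NormedSpace ℝ F] (L : F →L[ℝ] E) :
    IsBoundedLinearMap ℝ fun b : E →L[ℝ] E →L[ℝ] ℝ => b.bilinearComp L L := by
  refine ⟨⟨fun a b => by ext; simp, fun c b => by ext; simp⟩, ‖L‖ * ‖L‖ + 1, by positivity,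
    fun b => ContinuousLinearMap.opNorm_le_bound₂ _ (by positivity) fun u v => ?_⟩
  calc ‖b (L u) (L v)‖ ≤ ‖b‖ * (‖L‖ * ‖u‖) * (‖L‖ * ‖v‖) :=
        (b.le_opNorm₂ _ _).trans (by gcongr <;> exact L.le_opNorm _)
    _ ≤ (‖L‖ * ‖L‖ + 1) * ‖b‖ * ‖u‖ * ‖v‖ := by
        nlinarith [mul_nonneg (mul_nonneg (norm_nonneg b) (norm_nonneg u)) (norm_nonneg v)]

theorem warpedMetric_apply (gB : E₁ → (E₁ →L[ℝ] E₁ →L[ℝ] ℝ))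
    (gF : E₂ → (E₂ →L[ℝ] E₂ →L[ℝ] ℝ)) (f : E₁ → ℝ) (x u v : E₁ × E₂) :
    warpedMetric gB gF f x u v = gB x.1 u.1 v.1 + f x.1 ^ 2 * gF x.2 u.2 v.2 := rfl

variable {B : Set E₁} {F : Set E₂} {gB : E₁ → (E₁ →L[ℝ] E₁ →L[ℝ] ℝ)}
  {gF : E₂ → (E₂ →L[ℝ] E₂ →L[ℝ] ℝ)} {f : E₁ → ℝ}

theorem isSingularMetric_warpedMetric (hgB : IsSingularMetric B gB)
    (hgF : IsSingularMetric F gF) (hf : ContDiffOn ℝ (⊤ : ℕ∞) f B) :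
    IsSingularMetric (B ×ˢ F) (warpedMetric gB gF f) := by
  refine ⟨?_, fun x hx u v => ?_⟩
  · have hgB' : ContDiffOn ℝ (⊤ : ℕ∞) (gB ∘ Prod.fst) (B ×ˢ F) :=
      hgB.1.comp contDiffOn_fst fun _ hx => hx.1
    have hgF' : ContDiffOn ℝ (⊤ : ℕ∞) (gF ∘ Prod.snd) (B ×ˢ F) :=
      hgF.1.comp contDiffOn_snd fun _ hx => hx.2
    have hB : ContDiffOn ℝ (⊤ : ℕ∞) ((fun b : E₁ →L[ℝ] E₁ →L[ℝ] ℝ =>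
        b.bilinearComp (.fst ℝ E₁ E₂) (.fst ℝ E₁ E₂)) ∘ (gB ∘ Prod.fst)) (B ×ˢ F) :=
      (isBoundedLinearMap_bilinearComp (.fst ℝ E₁ E₂)).contDiff.comp_contDiffOn hgB'
    have hF : ContDiffOn ℝ (⊤ : ℕ∞) ((fun b : E₂ →L[ℝ] E₂ →L[ℝ] ℝ =>
        b.bilinearComp (.snd ℝ E₁ E₂) (.snd ℝ E₁ E₂)) ∘ (gF ∘ Prod.snd)) (B ×ˢ F) :=
      (isBoundedLinearMap_bilinearComp (.snd ℝ E₁ E₂)).contDiff.comp_contDiffOn hgF'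
    have hf2 : ContDiffOn ℝ (⊤ : ℕ∞) (fun x : E₁ × E₂ => f x.1 ^ 2) (B ×ˢ F) :=
      (hf.comp contDiffOn_fst fun _ hx => hx.1).pow 2
    -- instance search does not find this for iterated continuous linear maps
    have := @NormedSpace.toIsBoundedSMul ℝ (E₁ × E₂ →L[ℝ] E₁ × E₂ →L[ℝ] ℝ) _ _ _
    exact hB.add (hf2.smul hF)
  · rw [warpedMetric_apply, warpedMetric_apply, hgB.2 _ hx.1, hgF.2 _ hx.2]

theorem fderiv_warpedMetric_apply {r : E₁ × E₂}
    (hW : DifferentiableAt ℝ (warpedMetric gB gF f) r) (hgB : DifferentiableAt ℝ gB r.1)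
    (hgF : DifferentiableAt ℝ gF r.2) (hf : DifferentiableAt ℝ f r.1) (d u v : E₁ × E₂) :
    fderiv ℝ (warpedMetric gB gF f) r d u v =
      fderiv ℝ gB r.1 d.1 u.1 v.1 + 2 * f r.1 * fderiv ℝ f r.1 d.1 * gF r.2 u.2 v.2
        + f r.1 ^ 2 * fderiv ℝ gF r.2 d.2 u.2 v.2 := by
  have hB := ((hgB.clm_apply (differentiableAt_const u.1)).clm_apply
    (differentiableAt_const v.1)).hasFDerivAt.comp r hasFDerivAt_fst
  have hF := ((hgF.clm_apply (differentiableAt_const u.2)).clm_apply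
    (differentiableAt_const v.2)).hasFDerivAt.comp r hasFDerivAt_snd
  have hf2 := (hf.hasFDerivAt.comp r hasFDerivAt_fst).pow 2
  rw [← fderiv_clm_apply_apply hW]
  have H : HasFDerivAt (fun x : E₁ × E₂ => gB x.1 u.1 v.1 + f x.1 ^ 2 * gF x.2 u.2 v.2) _ r :=
    hB.add (hf2.mul hF)
  rw [show (fun x => warpedMetric gB gF f x u v) =
    fun x : E₁ × E₂ => gB x.1 u.1 v.1 + f x.1 ^ 2 * gF x.2 u.2 v.2 from rfl, H.fderiv]
  simp [fderiv_clm_apply_apply hgB, fderiv_clm_apply_apply hgF]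
  ring

theorem christoffelForm_warpedMetric {r : E₁ × E₂}
    (hW : DifferentiableAt ℝ (warpedMetric gB gF f) r) (hgB : DifferentiableAt ℝ gB r.1)
    (hgF : DifferentiableAt ℝ gF r.2) (hf : DifferentiableAt ℝ f r.1) (x y z : E₁ × E₂) :
    christoffelForm (warpedMetric gB gF f) r x y z =
      christoffelForm gB r.1 x.1 y.1 z.1 + f r.1 ^ 2 * christoffelForm gF r.2 x.2 y.2 z.2
        + f r.1 * (fderiv ℝ f r.1 x.1 * gF r.2 y.2 z.2 + fderiv ℝ f r.1 y.1 * gF r.2 z.2 x.2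
          - fderiv ℝ f r.1 z.1 * gF r.2 x.2 y.2) := by
  simp only [christoffelForm, fderiv_warpedMetric_apply hW hgB hgF hf]
  ring

end Warped

theorem warpedProduct_radicalStationary_general
    {E₁ E₂ : Type*} [NormedAddCommGroup E₁] [NormedSpace ℝ E₁]
    [NormedAddCommGroup E₂] [NormedSpace ℝ E₂]
    (B : Set E₁) (F : Set E₂) (hB : IsOpen B) (hF : IsOpen F)
    (gB : E₁ → (E₁ →L[ℝ] E₁ →L[ℝ] ℝ)) (gF : E₂ → (E₂ →L[ℝ] E₂ →L[ℝ] ℝ))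
    (hgB : IsSingularMetric B gB) (hgF : IsSingularMetric F gF)
    (hrsB : RadicalStationary B gB) (hrsF : RadicalStationary F gF)
    (f : E₁ → ℝ) (hf : ContDiffOn ℝ (⊤ : ℕ∞) f B)
    (hdf : DiffRadicalAnnihilator B gB f) :
    RadicalStationary (B ×ˢ F) (warpedMetric gB gF f) := by
  have hM := hB.prod hF
  have hgW := isSingularMetric_warpedMetric hgB hgF hf
  rw [radicalStationary_iff hB hgB] at hrsB
  rw [radicalStationary_iff hF hgF] at hrsF
  rw [radicalStationary_iff hM hgW]
  intro r hr x y
  obtain ⟨a₁, ha₁⟩ := hrsB r.1 hr.1 x.1 y.1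
  obtain ⟨a₂, ha₂⟩ := hrsF r.2 hr.2 x.2 y.2
  obtain ⟨u, hu⟩ := hdf r.1 hr.1
  set c := f r.1
  -- `c⁻¹` is junk at `c = 0`, but `c ^ 2 * c⁻¹ = c` holds regardless.
  have hc : c ^ 2 * c⁻¹ = c := by rw [sq, mul_self_mul_inv]
  refine ⟨(a₁ - (c * gF r.2 x.2 y.2) • u,
    a₂ + c⁻¹ • (fderiv ℝ f r.1 x.1 • y.2 + fderiv ℝ f r.1 y.1 • x.2)), fun z => ?_⟩
  rw [christoffelForm_warpedMetric (hgW.1.differentiableAt_of_isOpen hM hr)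
      (hgB.1.differentiableAt_of_isOpen hB hr.1) (hgF.1.differentiableAt_of_isOpen hF hr.2)
      (hf.differentiableAt_of_isOpen hB hr.1),
    ha₁, ha₂, hu z.1, hgF.2 _ hr.2 z.2 x.2, warpedMetric_apply]
  simp only [map_add, map_sub, map_smul, add_apply, sub_apply, smul_apply, smul_eq_mul]
  linear_combination
    -(fderiv ℝ f r.1 x.1 * gF r.2 y.2 z.2 + fderiv ℝ f r.1 y.1 * gF r.2 x.2 z.2) * hc

/-- The warped product of radical-stationary singular semi-Riemannian
manifolds, with warping function whose differential is radical-annihilator, is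
radical-stationary. -/
theorem warpedProduct_radicalStationary
    {E₁ E₂ : Type*} [NormedAddCommGroup E₁] [NormedSpace ℝ E₁] [FiniteDimensional ℝ E₁]
    [NormedAddCommGroup E₂] [NormedSpace ℝ E₂] [FiniteDimensional ℝ E₂]
    (B : Set E₁) (F : Set E₂) (hB : IsOpen B) (hF : IsOpen F)
    (gB : E₁ → (E₁ →L[ℝ] E₁ →L[ℝ] ℝ)) (gF : E₂ → (E₂ →L[ℝ] E₂ →L[ℝ] ℝ))
    (hgB : IsSingularMetric B gB) (hgF : IsSingularMetric F gF)
    (hrsB : RadicalStationary B gB) (hrsF : RadicalStationary F gF)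
    (f : E₁ → ℝ) (hf : ContDiffOn ℝ (⊤ : ℕ∞) f B)
    (hdf : DiffRadicalAnnihilator B gB f) :
    RadicalStationary (B ×ˢ F) (warpedMetric gB gF f) :=
  warpedProduct_radicalStationary_general B F hB hF gB gF hgB hgF hrsB hrsF f hf hdf

end
end

section
/- Let μ, ρ : ℝ → ℝ be smooth functions with μ(−r)² = μ(r)² and ρ(−r)² = ρ(r)² for all r ∈ ℝ, and let ε ∈ {−1, 1}. Define G : ℝ² \ {(0,0)} → Matrix (Fin 2) (Fin 2) ℝ by, writing r := √(x²+y²): G(x,y)₁₁ = ε·μ(r)² − ((ε·μ(r)²·r² − ρ(r)²)/r⁴)·y², G(x,y)₁₂ = G(x,y)₂₁ = ((ε·μ(r)²·r² − ρ(r)²)/r⁴)·x·y, G(x,y)₂₂ = ε·μ(r)² − ((ε·μ(r)²·r² − ρ(r)²)/r⁴)·x². Then G extends to a smooth map ℝ² → Matrix (Fin 2) (Fin 2) ℝ if and only if there exists a smooth function u : ℝ → ℝ such that ρ(r)² = ε·μ(r)²·r² + u(r)·r⁴ for all r ∈ ℝ. -/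
/-
A smooth even function `f` of one variable gives a smooth function `x ↦ f ‖x‖` on any real inner
product space: `f'` is odd, so Hadamard's lemma writes `f' t = t • g t` with `g` smooth and even;
then the differential of `f ‖x‖` is `g ‖x‖ • ⟪x, ·⟫`, and induction on the order of smoothness
applies.

If `ρ² = ε μ² r² + u r⁴` with `u` smooth, then `u` is even and, off the origin,
`G = ε μ(r)² I + u(r) (r² I - z zᵀ)`, which is smooth by the above. Conversely, if `G` extends
smoothly, then `w t = G(t,0)₁₁ - G(0,t)₁₁` is smooth and even, vanishes at `0`, and equals
`ρ(t)²/t² - ε μ(t)²` for `t ≠ 0`. Applying Hadamard's lemma twice gives `w = t² u` with `u` smooth,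
and `ρ² = ε μ² t² + u t⁴` extends from `t ≠ 0` to `t = 0` by continuity.
-/

open scoped ContDiff
open Filter Topology

noncomputable section

/-- The matrix, in Cartesian coordinates `(x,y) = (r cos θ, r sin θ)`, of the polar
warped product metric `ε μ²(r) dr⊗dr + ρ²(r) dθ⊗dθ` on `ℝ² \ {(0,0)}`. -/
def polarG (ε : ℝ) (μ ρ : ℝ → ℝ) : ℝ × ℝ → Matrix (Fin 2) (Fin 2) ℝ :=
  fun z =>
    let r := Real.sqrt (z.1 ^ 2 + z.2 ^ 2)
    !![ε * μ r ^ 2 - ((ε * μ r ^ 2 * r ^ 2 - ρ r ^ 2) / r ^ 4) * z.2 ^ 2,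
        ((ε * μ r ^ 2 * r ^ 2 - ρ r ^ 2) / r ^ 4) * z.1 * z.2;
      ((ε * μ r ^ 2 * r ^ 2 - ρ r ^ 2) / r ^ 4) * z.1 * z.2,
        ε * μ r ^ 2 - ((ε * μ r ^ 2 * r ^ 2 - ρ r ^ 2) / r ^ 4) * z.1 ^ 2]

variable {E F : Type*} [NormedAddCommGroup E] [NormedSpace ℝ E]
  [NormedAddCommGroup F] [InnerProductSpace ℝ F]

theorem Function.Even.apply_abs {α β : Type*} [AddGroup α] [LinearOrder α] {f : α → β}
    (hf : f.Even) (a : α) : f |a| = f a := by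
  rcases abs_choice a with h | h <;> rw [h]
  exact hf a

theorem Function.Even.deriv {𝕜 V : Type*} [NontriviallyNormedField 𝕜] [NormedAddCommGroup V]
    [NormedSpace 𝕜 V] {f : 𝕜 → V} (hf : f.Even) : (deriv f).Odd := fun x => by
  simpa [hf x, funext hf] using deriv_comp_neg f (-x)

theorem hasDerivAt_intervalIntegral_of_contDiff {G : ℝ × ℝ → E} (hG : ContDiff ℝ 1 G)
    (a b t₀ : ℝ) :
    HasDerivAt (fun t => ∫ s in a..b, G (t, s)) (∫ s in a..b, fderiv ℝ G (t₀, s) (1, 0)) t₀ := by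
  have hG' : Continuous fun p => fderiv ℝ G p (1, 0) :=
    (hG.continuous_fderiv one_ne_zero).clm_apply continuous_const
  obtain ⟨C, hC⟩ := (isCompact_closedBall t₀ 1 |>.prod isCompact_uIcc).exists_bound_of_continuousOn
    hG'.continuousOn
  refine (intervalIntegral.hasDerivAt_integral_of_dominated_loc_of_deriv_le
    (F := fun t s => G (t, s)) (F' := fun t s => fderiv ℝ G (t, s) (1, 0))
    (bound := fun _ => C) (Metric.closedBall_mem_nhds t₀ one_pos)
    (.of_forall fun t => (hG.continuous.comp (by fun_prop)).aestronglyMeasurable)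
    ((hG.continuous.comp (by fun_prop)).intervalIntegrable a b)
    (hG'.comp (by fun_prop)).aestronglyMeasurable
    (.of_forall fun s hs t ht => hC (t, s) ⟨ht, Set.uIoc_subset_uIcc hs⟩)
    intervalIntegrable_const
    (.of_forall fun s _ t _ => ?_)).2
  exact (hG.differentiable one_ne_zero (t, s)).hasFDerivAt.comp_hasDerivAt t
    ((hasDerivAt_id t).prodMk (hasDerivAt_const t s))

theorem contDiff_intervalIntegral_of_contDiff {n : ℕ} {G : ℝ × ℝ → E} (hG : ContDiff ℝ n G)
    (a b : ℝ) : ContDiff ℝ n fun t => ∫ s in a..b, G (t, s) := by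
  induction n generalizing G with
  | zero =>
    rw [Nat.cast_zero, contDiff_zero] at hG ⊢
    exact intervalIntegral.continuous_parametric_intervalIntegral_of_continuous'
      (f := fun t s => G (t, s)) hG a b
  | succ n ih =>
    have hG1 : ContDiff ℝ 1 G := hG.of_le (by exact_mod_cast Nat.le_add_left 1 n)
    have hderiv := hasDerivAt_intervalIntegral_of_contDiff hG1 a b
    rw [Nat.cast_succ, contDiff_succ_iff_deriv]
    refine ⟨fun t => (hderiv t).differentiableAt, by simp, ?_⟩
    rw [funext fun t => (hderiv t).deriv]
    exact ih ((hG.fderiv_right le_rfl).clm_apply contDiff_const)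

theorem exists_contDiff_eq_smul_of_eq_zero [CompleteSpace E] {h : ℝ → E} (hh : ContDiff ℝ ∞ h)
    (h0 : h 0 = 0) : ∃ g : ℝ → E, ContDiff ℝ ∞ g ∧ ∀ t, h t = t • g t := by
  have hd : ContDiff ℝ ∞ (deriv h) := hh.iterate_deriv 1
  refine ⟨fun t => ∫ s in (0 : ℝ)..1, deriv h (s * t), contDiff_infty.2 fun n =>
    contDiff_intervalIntegral_of_contDiff ((hd.comp (contDiff_snd.mul contDiff_fst)).of_le
      (by exact_mod_cast le_top)) 0 1, fun t => ?_⟩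
  have hFTC : ∫ s in (0 : ℝ)..1, t • deriv h (s * t) = h (1 * t) - h (0 * t) :=
    intervalIntegral.integral_eq_sub_of_hasDerivAt (fun s _ =>
      (hh.differentiable (by simp) (s * t)).hasDerivAt.scomp s (hasDerivAt_mul_const t))
      ((continuous_const.smul (hd.continuous.comp (by fun_prop))).intervalIntegrable 0 1)
  rw [intervalIntegral.integral_smul, one_mul, zero_mul, h0, sub_zero] at hFTC
  exact hFTC.symm

theorem Function.Odd.exists_contDiff_even_eq_smul [CompleteSpace E] {h : ℝ → E}
    (hh : ContDiff ℝ ∞ h) (hodd : h.Odd) :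
    ∃ g : ℝ → E, ContDiff ℝ ∞ g ∧ g.Even ∧ ∀ t, h t = t • g t := by
  have h0 : h 0 = 0 := by
    have h0 := hodd 0
    rw [neg_zero, eq_neg_iff_add_eq_zero, ← two_smul ℝ] at h0
    exact (smul_eq_zero.1 h0).resolve_left two_ne_zero
  obtain ⟨g, hg, hhg⟩ := exists_contDiff_eq_smul_of_eq_zero hh h0
  refine ⟨g, hg, fun t => ?_, hhg⟩
  rcases eq_or_ne t 0 with rfl | ht
  · rw [neg_zero]
  · have hodd_t := hodd t
    rw [hhg, hhg, neg_smul, neg_inj] at hodd_t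
    exact (isUnit_iff_ne_zero.2 ht).smul_left_cancel.1 hodd_t

theorem exists_contDiff_eq_sq_smul_of_eq_zero_of_deriv_eq_zero [CompleteSpace E] {h : ℝ → E}
    (hh : ContDiff ℝ ∞ h) (h0 : h 0 = 0) (h0' : deriv h 0 = 0) :
    ∃ u : ℝ → E, ContDiff ℝ ∞ u ∧ ∀ t, h t = t ^ 2 • u t := by
  obtain ⟨g, hg, hhg⟩ := exists_contDiff_eq_smul_of_eq_zero hh h0
  have hg0 : g 0 = 0 := by
    have hderiv : HasDerivAt (fun t => t • g t) ((0 : ℝ) • deriv g 0 + (1 : ℝ) • g 0) 0 :=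
      (hasDerivAt_id' 0).smul (hg.differentiable (by simp) 0).hasDerivAt
    rw [← funext hhg, zero_smul, one_smul, zero_add] at hderiv
    rw [← h0', hderiv.deriv]
  obtain ⟨u, hu, hgu⟩ := exists_contDiff_eq_smul_of_eq_zero hg hg0
  exact ⟨u, hu, fun t => by rw [hhg, hgu, smul_smul, sq]⟩

theorem hasFDerivAt_comp_norm_of_deriv_eq_smul {f g : ℝ → E} (hf : Differentiable ℝ f)
    (hfg : ∀ t, deriv f t = t • g t) (x : F) :
    HasFDerivAt (fun y : F => f ‖y‖) ((innerSL ℝ x).smulRight (g ‖x‖)) x := by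
  rcases eq_or_ne x 0 with rfl | hx
  · have hf0 : HasDerivAt f 0 0 := by simpa [hfg] using (hf 0).hasDerivAt
    have hlo : (fun t => f t - f 0) =o[𝓝 0] fun t => t := by
      simpa using hasDerivAt_iff_isLittleO.1 hf0
    rw [map_zero, ContinuousLinearMap.zero_smulRight, hasFDerivAt_iff_isLittleO_nhds_zero]
    simpa [Function.comp_def] using
      (hlo.comp_tendsto (continuous_norm.tendsto' (0 : F) 0 norm_zero)).trans_isBigO
        (Asymptotics.isBigO_norm_left.2 (Asymptotics.isBigO_refl (fun y : F => y) _))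
  · have hsqrt : HasDerivAt (fun s => f √s) ((1 / (2 * √(‖x‖ ^ 2))) • deriv f √(‖x‖ ^ 2))
        (‖x‖ ^ 2) :=
      (hf _).hasDerivAt.scomp _ (Real.hasDerivAt_sqrt (by positivity))
    convert hsqrt.hasFDerivAt.comp x (hasStrictFDerivAt_norm_sq x).hasFDerivAt using 1
    · funext y
      simp [Real.sqrt_sq (norm_nonneg y)]
    · ext v
      simp [Real.sqrt_sq (norm_nonneg x), hfg, smul_smul]
      rw [← Nat.cast_smul_eq_nsmul ℝ, smul_smul]
      congr 1
      field_simp [norm_ne_zero_iff.2 hx]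
      norm_num

theorem Function.Even.contDiff_comp_norm [CompleteSpace E] {f : ℝ → E} (hf : ContDiff ℝ ∞ f)
    (he : f.Even) : ContDiff ℝ ∞ fun x : F => f ‖x‖ := by
  refine contDiff_infty.2 fun n => ?_
  induction n generalizing f with
  | zero => exact contDiff_zero.2 (hf.continuous.comp continuous_norm)
  | succ n ih =>
    obtain ⟨g, hg, hge, hfg⟩ := he.deriv.exists_contDiff_even_eq_smul (hf.iterate_deriv 1)
    have hderiv := hasFDerivAt_comp_norm_of_deriv_eq_smul (F := F) (hf.differentiable (by simp)) hfg
    rw [Nat.cast_succ, contDiff_succ_iff_fderiv]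
    refine ⟨fun x => (hderiv x).differentiableAt, by simp, ?_⟩
    rw [funext fun x => (hderiv x).fderiv]
    exact (innerSL ℝ).contDiff.smulRight (ih hg hge)

theorem Function.Even.contDiff_comp_sqrt_sq_add_sq [CompleteSpace E] {f : ℝ → E}
    (hf : ContDiff ℝ ∞ f) (he : f.Even) :
    ContDiff ℝ ∞ fun z : ℝ × ℝ => f √(z.1 ^ 2 + z.2 ^ 2) := by
  convert (he.contDiff_comp_norm (F := WithLp 2 (ℝ × ℝ)) hf).comp
    (WithLp.prodContinuousLinearEquiv 2 ℝ ℝ ℝ).symm.contDiff using 2 with z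
  simp [WithLp.prod_norm_eq_of_L2]

theorem polarG_mk_zero_sub_polarG_zero_mk (ε : ℝ) {μ ρ : ℝ → ℝ}
    (hμe : (fun r => μ r ^ 2).Even) (hρe : (fun r => ρ r ^ 2).Even) {t : ℝ} (ht : t ≠ 0) :
    polarG ε μ ρ (t, 0) 1 1 - polarG ε μ ρ (0, t) 1 1 = ρ t ^ 2 / t ^ 2 - ε * μ t ^ 2 := by
  have h4 : |t| ^ 4 = t ^ 4 := (even_two_mul 2).pow_abs t
  simp only [polarG, Matrix.of_apply, Matrix.cons_val_one, Matrix.cons_val_zero]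
  simp [Real.sqrt_sq_eq_abs, h4, hμe.apply_abs t, hρe.apply_abs t]
  field_simp
  ring

theorem even_of_sq_eq_add_mul_pow_four {ε : ℝ} {μ ρ u : ℝ → ℝ}
    (hμe : (fun r => μ r ^ 2).Even) (hρe : (fun r => ρ r ^ 2).Even)
    (h : ∀ r, ρ r ^ 2 = ε * μ r ^ 2 * r ^ 2 + u r * r ^ 4) : u.Even := fun t => by
  rcases eq_or_ne t 0 with rfl | ht
  · rw [neg_zero]
  · refine mul_right_cancel₀ (pow_ne_zero 4 ht) ?_
    have hμt : μ (-t) ^ 2 = μ t ^ 2 := hμe t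
    have hρt : ρ (-t) ^ 2 = ρ t ^ 2 := hρe t
    linear_combination h t - h (-t) + hρt - ε * t ^ 2 * hμt

/-- `ε μ(r)² I + u(r) (r² I - z zᵀ)`, written out in coordinates. -/
def polarGExtension (ε : ℝ) (μ u : ℝ → ℝ) : ℝ × ℝ → Matrix (Fin 2) (Fin 2) ℝ := fun z =>
  let r := √(z.1 ^ 2 + z.2 ^ 2)
  !![ε * μ r ^ 2 + u r * z.2 ^ 2, -(u r * z.1 * z.2);
    -(u r * z.1 * z.2), ε * μ r ^ 2 + u r * z.1 ^ 2]

theorem polarG_eq_polarGExtension {ε : ℝ} {μ ρ u : ℝ → ℝ}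
    (h : ∀ r, ρ r ^ 2 = ε * μ r ^ 2 * r ^ 2 + u r * r ^ 4) {z : ℝ × ℝ} (hz : z ≠ (0, 0)) :
    polarG ε μ ρ z = polarGExtension ε μ u z := by
  have hr : √(z.1 ^ 2 + z.2 ^ 2) ≠ 0 := by
    rw [Real.sqrt_ne_zero (by positivity), sq, sq, Ne, mul_self_add_mul_self_eq_zero]
    exact fun h => hz (Prod.ext h.1 h.2)
  ext i j
  fin_cases i <;> fin_cases j <;> simp [polarG, polarGExtension, h] <;> field_simp <;> ring

theorem contDiff_polarGExtension_apply {ε : ℝ} {μ u : ℝ → ℝ} (hμ : ContDiff ℝ ∞ μ)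
    (hμe : (fun r => μ r ^ 2).Even) (hu : ContDiff ℝ ∞ u) (hue : u.Even) (i j : Fin 2) :
    ContDiff ℝ ∞ fun z => polarGExtension ε μ u z i j := by
  have hA := hμe.contDiff_comp_sqrt_sq_add_sq (hμ.pow 2)
  have hB := hue.contDiff_comp_sqrt_sq_add_sq hu
  fin_cases i <;> fin_cases j <;>
    simp only [polarGExtension, Fin.zero_eta, Fin.mk_one, Fin.isValue, Matrix.of_apply,
      Matrix.cons_val_one, Matrix.cons_val_zero]
  · exact (contDiff_const.mul hA).add (hB.mul (contDiff_snd.pow 2))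
  · exact ((hB.mul contDiff_fst).mul contDiff_snd).neg
  · exact ((hB.mul contDiff_fst).mul contDiff_snd).neg
  · exact (contDiff_const.mul hA).add (hB.mul (contDiff_fst.pow 2))

theorem polarG_extends_smooth_iff_general (ε : ℝ)
    (μ ρ : ℝ → ℝ) (hμ : ContDiff ℝ (⊤ : ℕ∞) μ) (hρ : ContDiff ℝ (⊤ : ℕ∞) ρ)
    (hμe : ∀ r : ℝ, μ (-r) ^ 2 = μ r ^ 2) (hρe : ∀ r : ℝ, ρ (-r) ^ 2 = ρ r ^ 2) :
    (∃ G : ℝ × ℝ → Matrix (Fin 2) (Fin 2) ℝ,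
      (∀ i j : Fin 2, ContDiff ℝ (⊤ : ℕ∞) (fun z => G z i j)) ∧
      ∀ z : ℝ × ℝ, z ≠ (0, 0) → G z = polarG ε μ ρ z) ↔
    (∃ u : ℝ → ℝ, ContDiff ℝ (⊤ : ℕ∞) u ∧
      ∀ r : ℝ, ρ r ^ 2 = ε * μ r ^ 2 * r ^ 2 + u r * r ^ 4) := by
  constructor
  · rintro ⟨G, hG, hGpolar⟩
    set w : ℝ → ℝ := fun t => G (t, 0) 1 1 - G (0, t) 1 1
    have hw : ContDiff ℝ ∞ w := ((hG 1 1).comp (contDiff_id.prodMk contDiff_const)).sub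
      ((hG 1 1).comp (contDiff_const.prodMk contDiff_id))
    have hw_ne : ∀ t ≠ 0, w t = ρ t ^ 2 / t ^ 2 - ε * μ t ^ 2 := fun t ht => by
      simp only [w, hGpolar (t, 0) (by simp [ht]), hGpolar (0, t) (by simp [ht])]
      exact polarG_mk_zero_sub_polarG_zero_mk ε hμe hρe ht
    have hw_even : w.Even := fun t => by
      rcases eq_or_ne t 0 with rfl | ht
      · rw [neg_zero]
      · rw [hw_ne t ht, hw_ne (-t) (neg_ne_zero.2 ht), hρe, hμe, neg_sq]
    obtain ⟨u, hu, hwu⟩ := exists_contDiff_eq_sq_smul_of_eq_zero_of_deriv_eq_zero hw (sub_self _)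
      hw_even.deriv.map_zero
    refine ⟨u, hu, congrFun (Continuous.ext_on (dense_compl_singleton 0) (hρ.continuous.pow 2)
      (by fun_prop) fun t (ht : t ≠ 0) => ?_)⟩
    have hwu_t := hwu t
    rw [hw_ne t ht, smul_eq_mul, div_sub' (pow_ne_zero 2 ht), div_eq_iff (pow_ne_zero 2 ht)]
      at hwu_t
    linear_combination hwu_t
  · rintro ⟨u, hu, hρu⟩
    exact ⟨polarGExtension ε μ u, contDiff_polarGExtension_apply hμ hμe hu
      (even_of_sq_eq_add_mul_pow_four hμe hρe hρu),
      fun z hz => (polarG_eq_polarGExtension hρu hz).symm⟩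

/-- the polar warped product metric extends smoothly across the origin
iff `ρ² = ε μ² r² + u r⁴` for some smooth `u`. -/
theorem polarG_extends_smooth_iff (ε : ℝ) (hε : ε = 1 ∨ ε = -1)
    (μ ρ : ℝ → ℝ) (hμ : ContDiff ℝ (⊤ : ℕ∞) μ) (hρ : ContDiff ℝ (⊤ : ℕ∞) ρ)
    (hμe : ∀ r : ℝ, μ (-r) ^ 2 = μ r ^ 2) (hρe : ∀ r : ℝ, ρ (-r) ^ 2 = ρ r ^ 2) :
    (∃ G : ℝ × ℝ → Matrix (Fin 2) (Fin 2) ℝ,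
      (∀ i j : Fin 2, ContDiff ℝ (⊤ : ℕ∞) (fun z => G z i j)) ∧
      ∀ z : ℝ × ℝ, z ≠ (0, 0) → G z = polarG ε μ ρ z) ↔
    (∃ u : ℝ → ℝ, ContDiff ℝ (⊤ : ℕ∞) u ∧
      ∀ r : ℝ, ρ r ^ 2 = ε * μ r ^ 2 * r ^ 2 + u r * r ^ 4) :=
  polarG_extends_smooth_iff_general ε μ ρ hμ hρ hμe hρe

end
end
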